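/- arXiv:1410.0713 — 6 statements merged into one kernel-verified Lean document; each statement's English description precedes it below -/
import Mathlib

section
/- Let A ⊆ ℤⁿ be generic. If B ⊆ A is neighborly in A, then B is strongly neighborly in A. -/
/-- `Dom α β` means `α ≪ β`: componentwise strict domination. -/
def Dom {n : ℕ} (α β : Fin n → ℤ) : Prop := ∀ i, α i < β i

/-- `vee B` is the componentwise maximum `∨B` of a finite set `B ⊆ ℤⁿ`
(junk value `0` in a component if `B` is empty). -/
def vee {n : ℕ} (B : Finset (Fin n → ℤ)) : Fin n → ℤ :=
  fun i => WithBot.unbotD 0 ((B.image fun α => α i).max)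

/-- `B` is neighborly in `A`: `B` is a nonempty finite subset of `A` and
no `α ∈ A` satisfies `α ≪ ∨B`. -/
def Neighborly {n : ℕ} (A : Set (Fin n → ℤ)) (B : Finset (Fin n → ℤ)) : Prop :=
  B.Nonempty ∧ ↑B ⊆ A ∧ ∀ α ∈ A, ¬ Dom α (vee B)


/-- `B` is strongly neighborly in `A`: `B` is a nonempty finite subset of `A` and
every nonempty finite `B' ⊆ A` with `∨B' = ∨B` equals `B`. -/
def StronglyNeighborly {n : ℕ} (A : Set (Fin n → ℤ)) (B : Finset (Fin n → ℤ)) : Prop :=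
  B.Nonempty ∧ ↑B ⊆ A ∧
    ∀ B' : Finset (Fin n → ℤ), B'.Nonempty → ↑B' ⊆ A → vee B' = vee B → B' = B


/-- `A ⊆ ℤⁿ` is generic: for every `η ∈ ℤⁿ` such that no `α ∈ A` satisfies `α ≪ η`,
and every coordinate `i`, at most one `α ∈ A` has `α ≤ η` and `α i = η i`. -/
def Generic {n : ℕ} (A : Set (Fin n → ℤ)) : Prop :=
  ∀ η : Fin n → ℤ, (∀ α ∈ A, ¬ Dom α η) →
    ∀ i : Fin n, ∀ α ∈ A, ∀ β ∈ A,
      α ≤ η → α i = η i → β ≤ η → β i = η i → α = β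

/-! If `B` and `B'` have the same join `η` and nothing in `A` lies strictly below `η`, then every
`γ ∈ B'` meets `η` in some coordinate `i`, as does some `β ∈ B`, which attains the maximum in
coordinate `i`; genericity forces `γ = β`. Hence `B' ⊆ B`, and by symmetry `B' = B`. -/

lemma le_vee {n : ℕ} {B : Finset (Fin n → ℤ)} {α : Fin n → ℤ} (h : α ∈ B) :
    α ≤ vee B := by
  intro i
  obtain ⟨m, hm⟩ := Finset.max_of_nonempty ⟨_, Finset.mem_image_of_mem (fun α => α i) h⟩
  have hle : (α i : WithBot ℤ) ≤ m := hm ▸ Finset.le_max (Finset.mem_image_of_mem _ h)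
  simpa [vee, hm] using hle

lemma exists_mem_apply_eq_vee {n : ℕ} {B : Finset (Fin n → ℤ)} (h : B.Nonempty) (i : Fin n) :
    ∃ α ∈ B, α i = vee B i := by
  obtain ⟨m, hm⟩ := Finset.max_of_nonempty (h.image fun α => α i)
  obtain ⟨α, hα, hαi⟩ := Finset.mem_image.mp (Finset.mem_of_max hm)
  exact ⟨α, hα, by simp [vee, hm, hαi]⟩

lemma exists_apply_eq_of_le_of_not_dom {n : ℕ} {α η : Fin n → ℤ} (hle : α ≤ η)
    (hdom : ¬ Dom α η) : ∃ i, α i = η i := by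
  obtain ⟨i, hi⟩ : ∃ i, ¬ α i < η i := by simpa [Dom] using hdom
  exact ⟨i, le_antisymm (hle i) (not_lt.mp hi)⟩

lemma subset_of_vee_eq {n : ℕ} {A : Set (Fin n → ℤ)} (hA : Generic A)
    {B B' : Finset (Fin n → ℤ)} (hBne : B.Nonempty) (hB : ↑B ⊆ A) (hB' : ↑B' ⊆ A)
    (hdom : ∀ α ∈ A, ¬ Dom α (vee B)) (hveq : vee B' = vee B) : B' ⊆ B := by
  intro γ hγ
  have hγle : γ ≤ vee B := hveq ▸ le_vee hγ
  obtain ⟨i, hγi⟩ := exists_apply_eq_of_le_of_not_dom hγle (hdom γ (hB' hγ))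
  obtain ⟨β, hβ, hβi⟩ := exists_mem_apply_eq_vee hBne i
  obtain rfl : γ = β := hA _ hdom i γ (hB' hγ) β (hB hβ) hγle hγi (le_vee hβ) hβi
  exact hβ

theorem stmt2 {n : ℕ} (A : Set (Fin n → ℤ)) (hA : Generic A)
    (B : Finset (Fin n → ℤ)) (hB : Neighborly A B) :
    StronglyNeighborly A B := by
  obtain ⟨hBne, hBA, hdom⟩ := hB
  refine ⟨hBne, hBA, fun B' hB'ne hB'A hveq => ?_⟩
  exact (subset_of_vee_eq hA hBne hBA hB'A hdom hveq).antisymm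
    (subset_of_vee_eq hA hB'ne hB'A hBA (hveq ▸ hdom) hveq.symm)
end

section
/- Let Λ ⊆ ℤⁿ be an antichain lattice that admits a Markov basis. Then Λ is generic as a subset of ℤⁿ if and only if there exists a minimal Markov basis L of Λ such that every λ ∈ L is fully supported (λᵢ ≠ 0 for every i). -/
/-- An antichain lattice: a subgroup of `ℤⁿ` no two distinct elements of which are
comparable in the componentwise order. -/
def IsAntichainLattice {n : ℕ} (Λ : AddSubgroup (Fin n → ℤ)) : Prop :=
  ∀ a ∈ Λ, ∀ b ∈ Λ, a ≤ b → a = b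

/-- The fiber of `Λ` over `u`: `(u + Λ) ∩ ℕⁿ`. -/
def fiber {n : ℕ} (Λ : AddSubgroup (Fin n → ℤ)) (u : Fin n → ℤ) : Set (Fin n → ℤ) :=
  {v | (∀ i, 0 ≤ v i) ∧ v - u ∈ Λ}

/-- A Markov basis of `Λ`: a finite subset `B ⊆ Λ` such that for every `u ∈ ℕⁿ`
the graph on the fiber `(u + Λ) ∩ ℕⁿ`, with edges between `v` and `w` whenever
`v - w ∈ B ∪ (-B)`, is connected. -/
def IsMarkovBasis {n : ℕ} (Λ : AddSubgroup (Fin n → ℤ)) (B : Finset (Fin n → ℤ)) : Prop :=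
  ↑B ⊆ (Λ : Set (Fin n → ℤ)) ∧
    ∀ u : Fin n → ℤ, (∀ i, 0 ≤ u i) →
      ∀ v ∈ fiber Λ u, ∀ w ∈ fiber Λ u,
        Relation.ReflTransGen
          (fun x y => x ∈ fiber Λ u ∧ y ∈ fiber Λ u ∧ (x - y ∈ B ∨ y - x ∈ B)) v w

/-- A minimal Markov basis: a Markov basis no proper subset of which is a Markov basis. -/
def IsMinimalMarkovBasis {n : ℕ} (Λ : AddSubgroup (Fin n → ℤ)) (B : Finset (Fin n → ℤ)) : Prop :=
  IsMarkovBasis Λ B ∧ ∀ B' : Finset (Fin n → ℤ), B' ⊂ B → ¬ IsMarkovBasis Λ B'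

/-!
Generic ⇒ full support: let `l ≠ 0` be a move of a minimal Markov basis with `l i = 0`. If some
`γ ∈ Λ` satisfies `γ ≪ l⁺`, the fiber over `l⁺` contains a strictly positive point `z`, and
`l⁺`, `z`, `l⁻` are joined without using `l`, so `l` is redundant; otherwise genericity at
`η = l⁺`, applied to `0` and `l`, forces `l = 0`.

Full support ⇒ generic: a failure of genericity at `η` for `α ≠ β` yields the points `η - α`,
`η - β` of a fiber without strictly positive points, both vanishing at `i`. Cancelling their
common part `v ⊓ w` lowers the total weight of the fiber; once the supports are disjoint, the
first move of a Markov path from `v` to `w` changes every coordinate and produces a new such pair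
one step closer to `w`. This descent cannot go on forever.
-/

open Relation

section

variable {n : ℕ} {Λ : AddSubgroup (Fin n → ℤ)} {L : Finset (Fin n → ℤ)}

lemma mem_fiber_self {u : Fin n → ℤ} (hu : 0 ≤ u) : u ∈ fiber Λ u :=
  ⟨hu, by simp⟩

lemma fiber_eq_of_mem {u v : Fin n → ℤ} (hv : v ∈ fiber Λ u) : fiber Λ v = fiber Λ u := by
  ext x
  refine and_congr_right fun _ => ⟨fun h => ?_, fun h => ?_⟩
  · simpa using Λ.add_mem h hv.2
  · simpa using Λ.sub_mem h hv.2

lemma add_mem_fiber_add {u x p : Fin n → ℤ} (hx : x ∈ fiber Λ u) (hp : 0 ≤ p) :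
    x + p ∈ fiber Λ (u + p) :=
  ⟨fun i => add_nonneg (hx.1 i) (hp i), by simpa using hx.2⟩

lemma IsAntichainLattice.eq_of_le_of_mem_fiber (hΛ : IsAntichainLattice Λ) {u x y : Fin n → ℤ}
    (hx : x ∈ fiber Λ u) (hy : y ∈ fiber Λ u) (hxy : x ≤ y) : x = y :=
  sub_left_injective (hΛ _ hx.2 _ hy.2 (sub_le_sub_right hxy u))

lemma IsAntichainLattice.finite_fiber (hΛ : IsAntichainLattice Λ) (u : Fin n → ℤ) :
    (fiber Λ u).Finite := by
  let toNat : (Fin n → ℤ) → Fin n → ℕ := fun x i => (x i).toNat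
  have hmono : ∀ x ∈ fiber Λ u, ∀ y ∈ fiber Λ u, toNat x ≤ toNat y → x ≤ y := by
    intro x hx y hy h i
    have := h i
    have := hx.1 i
    have := hy.1 i
    simp only [toNat] at *
    omega
  refine Set.Finite.of_finite_image (f := toNat) ?_ fun x hx y hy h =>
    hΛ.eq_of_le_of_mem_fiber hx hy (hmono x hx y hy h.le)
  refine WellQuasiOrderedLE.finite_of_isAntichain ?_
  rintro _ ⟨x, hx, rfl⟩ _ ⟨y, hy, rfl⟩ hne hle
  exact hne (congrArg toNat (hΛ.eq_of_le_of_mem_fiber hx hy (hmono x hx y hy hle)))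

def MarkovStep (F : Set (Fin n → ℤ)) (B : Finset (Fin n → ℤ)) (x y : Fin n → ℤ) : Prop :=
  x ∈ F ∧ y ∈ F ∧ (x - y ∈ B ∨ y - x ∈ B)

lemma MarkovStep.symm {F : Set (Fin n → ℤ)} {B : Finset (Fin n → ℤ)} {x y : Fin n → ℤ}
    (h : MarkovStep F B x y) : MarkovStep F B y x :=
  ⟨h.2.1, h.1, h.2.2.symm⟩

lemma reflTransGen_markovStep_symm {F : Set (Fin n → ℤ)} {B : Finset (Fin n → ℤ)}
    {x y : Fin n → ℤ} (h : ReflTransGen (MarkovStep F B) x y) :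
    ReflTransGen (MarkovStep F B) y x :=
  have : Std.Symm (MarkovStep F B) := ⟨fun _ _ => MarkovStep.symm⟩
  ReflTransGen.stdSymm.symm _ _ h

lemma reflTransGen_markovStep_add {B : Finset (Fin n → ℤ)} {u a b p : Fin n → ℤ} (hp : 0 ≤ p)
    (h : ReflTransGen (MarkovStep (fiber Λ u) B) a b) :
    ReflTransGen (MarkovStep (fiber Λ (u + p)) B) (a + p) (b + p) :=
  h.lift (· + p) fun x y ⟨hx, hy, hxy⟩ =>
    ⟨add_mem_fiber_add hx hp, add_mem_fiber_add hy hp, by simpa using hxy⟩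

lemma IsMarkovBasis.reflTransGen {u : Fin n → ℤ} (hL : IsMarkovBasis Λ L) (hu : 0 ≤ u)
    {v w : Fin n → ℤ} (hv : v ∈ fiber Λ u) (hw : w ∈ fiber Λ u) :
    ReflTransGen (MarkovStep (fiber Λ u) L) v w :=
  hL.2 u hu v hv w hw

lemma IsMarkovBasis.erase {l : Fin n → ℤ} (hL : IsMarkovBasis Λ L)
    (hl : ∀ u x y, x ∈ fiber Λ u → y ∈ fiber Λ u → x - y = l →
      ReflTransGen (MarkovStep (fiber Λ u) (L.erase l)) x y) :
    IsMarkovBasis Λ (L.erase l) := by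
  refine ⟨(Finset.coe_subset.mpr (L.erase_subset l)).trans hL.1, fun u hu v hv w hw => ?_⟩
  refine (hL.reflTransGen hu hv hw).lift' id fun x y ⟨hx, hy, hxy⟩ => ?_
  by_cases hxl : x - y = l
  · exact hl u x y hx hy hxl
  by_cases hyl : y - x = l
  · exact reflTransGen_markovStep_symm (hl u y x hy hx hyl)
  refine .single ⟨hx, hy, ?_⟩
  simpa [Finset.mem_erase, hxl, hyl] using hxy

lemma IsMarkovBasis.erase_zero (hL : IsMarkovBasis Λ L) : IsMarkovBasis Λ (L.erase 0) :=
  hL.erase fun _ x y _ _ h => by rw [sub_eq_zero.mp h]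

lemma exists_isMinimalMarkovBasis (h : ∃ B, IsMarkovBasis Λ B) :
    ∃ L, IsMinimalMarkovBasis Λ L := by
  obtain ⟨L, hL, hmin⟩ := wellFounded_lt.has_min {B | IsMarkovBasis Λ B} h
  exact ⟨L, hL, fun B hB hBL => hmin B hBL hB⟩

lemma IsAntichainLattice.exists_pos_posPart (hΛ : IsAntichainLattice Λ) {l : Fin n → ℤ}
    (hl : l ∈ Λ) (hl0 : l ≠ 0) : ∃ j, 0 < l⁺ j := by
  by_contra! h
  have : l⁺ = 0 := le_antisymm h (posPart_nonneg l)
  exact hl0 (hΛ l hl 0 Λ.zero_mem (posPart_eq_zero.mp this))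

lemma posPart_mem_fiber (l : Fin n → ℤ) : l⁺ ∈ fiber Λ l⁺ :=
  mem_fiber_self (posPart_nonneg l)

lemma negPart_mem_fiber {l : Fin n → ℤ} (hl : l ∈ Λ) : l⁻ ∈ fiber Λ l⁺ :=
  ⟨negPart_nonneg l, by
    rw [show l⁻ - l⁺ = -(l⁺ - l⁻) by abel, posPart_sub_negPart]
    exact Λ.neg_mem hl⟩

/-- Points of the fiber over `l⁺` sharing a positive coordinate `j` are joined without the move
`l`: shifted down by `eⱼ` they lie in a fiber where `l` cannot be applied, since `c - d = l` there
would give `l⁺ ≤ c < c + eⱼ` inside the antichain fiber over `l⁺`. -/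
lemma IsMarkovBasis.reflTransGen_erase_of_pos (hΛ : IsAntichainLattice Λ)
    (hL : IsMarkovBasis Λ L) {l a b : Fin n → ℤ} {j : Fin n} (ha : a ∈ fiber Λ l⁺)
    (hb : b ∈ fiber Λ l⁺) (haj : 0 < a j) (hbj : 0 < b j) :
    ReflTransGen (MarkovStep (fiber Λ l⁺) (L.erase l)) a b := by
  set e : Fin n → ℤ := Pi.single j 1
  have he : 0 ≤ e := Pi.single_nonneg.mpr zero_le_one
  have hdown : ∀ c ∈ fiber Λ l⁺, 0 < c j → c - e ∈ fiber Λ (a - e) := by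
    intro c hc hcj
    refine ⟨fun k => ?_, by simpa using Λ.sub_mem hc.2 ha.2⟩
    rcases eq_or_ne k j with rfl | hk
    · simp only [Pi.sub_apply, e, Pi.single_eq_same]
      omega
    · simpa [e, hk] using hc.1 k
  have hup : ∀ c ∈ fiber Λ (a - e), c + e ∈ fiber Λ l⁺ := fun c hc => by
    simpa [fiber_eq_of_mem ha] using add_mem_fiber_add hc he
  have hno_l : ∀ c ∈ fiber Λ (a - e), ∀ d ∈ fiber Λ (a - e), c - d ≠ l := by
    intro c hc d hd hcd
    have hle : l⁺ ≤ c := sup_le (by rw [← hcd]; exact sub_le_self c hd.1) hc.1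
    have hj := congrFun (hΛ.eq_of_le_of_mem_fiber (posPart_mem_fiber l) (hup c hc)
      (hle.trans (le_add_of_nonneg_right he))) j
    simp only [Pi.add_apply, e, Pi.single_eq_same] at hj
    linarith [hle j]
  have path := hL.reflTransGen (hdown a ha haj).1 (hdown a ha haj) (hdown b hb hbj)
  have path' : ReflTransGen (MarkovStep (fiber Λ (a - e)) (L.erase l)) (a - e) (b - e) :=
    ReflTransGen.mono (fun x y ⟨hx, hy, hxy⟩ => ⟨hx, hy, by
      simpa [Finset.mem_erase, hno_l x hx y hy, hno_l y hy x hx] using hxy⟩) _ _ path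
  simpa [fiber_eq_of_mem ha] using reflTransGen_markovStep_add he path'

lemma IsMarkovBasis.erase_of_pos_mem_fiber (hΛ : IsAntichainLattice Λ) (hL : IsMarkovBasis Λ L)
    {l z : Fin n → ℤ} (hl : l ∈ Λ) (hl0 : l ≠ 0) (hz : ∀ j, 0 < z j) (hzl : z ∈ fiber Λ l⁺) :
    IsMarkovBasis Λ (L.erase l) := by
  obtain ⟨jp, hjp⟩ := hΛ.exists_pos_posPart hl hl0
  obtain ⟨jn, hjn⟩ := hΛ.exists_pos_posPart (Λ.neg_mem hl) (neg_ne_zero.mpr hl0)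
  rw [posPart_neg] at hjn
  have bridge : ReflTransGen (MarkovStep (fiber Λ l⁺) (L.erase l)) l⁺ l⁻ :=
    (hL.reflTransGen_erase_of_pos hΛ (posPart_mem_fiber l) hzl hjp (hz jp)).trans
      (hL.reflTransGen_erase_of_pos hΛ hzl (negPart_mem_fiber hl) (hz jn) hjn)
  refine hL.erase fun u x y hx hy hxy => ?_
  have hp : 0 ≤ x - l⁺ := sub_nonneg.mpr (sup_le (by rw [← hxy]; exact sub_le_self x hy.1) hx.1)
  have hpx : l⁺ + (x - l⁺) = x := add_sub_cancel l⁺ x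
  have hpy : l⁻ + (x - l⁺) = y := by
    rw [show l⁻ + (x - l⁺) = x - (l⁺ - l⁻) by abel, posPart_sub_negPart, ← hxy, sub_sub_cancel]
  simpa [hpx, hpy, fiber_eq_of_mem hx] using reflTransGen_markovStep_add hp bridge

lemma IsMinimalMarkovBasis.apply_ne_zero_of_generic (hΛ : IsAntichainLattice Λ)
    (hL : IsMinimalMarkovBasis Λ L) (hG : Generic (Λ : Set (Fin n → ℤ))) {l : Fin n → ℤ}
    (hl : l ∈ L) (i : Fin n) : l i ≠ 0 := by
  intro hli
  have hl0 : l ≠ 0 := by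
    rintro rfl
    exact hL.2 _ (Finset.erase_ssubset hl) hL.1.erase_zero
  by_cases hdom : ∀ γ ∈ Λ, ¬ Dom γ l⁺
  · exact hl0 (hG l⁺ hdom i 0 Λ.zero_mem l (hL.1.1 hl) (posPart_nonneg l)
      (by simp [hli]) (le_posPart l) (by simp [hli])).symm
  · obtain ⟨γ, hγ, hγl⟩ : ∃ γ ∈ Λ, Dom γ l⁺ := by simpa using hdom
    refine hL.2 _ (Finset.erase_ssubset hl)
      (hL.1.erase_of_pos_mem_fiber hΛ (hL.1.1 hl) hl0 (z := l⁺ - γ) (fun j => ?_) ⟨?_, ?_⟩)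
    · simpa using hγl j
    · exact fun j => (sub_pos.mpr (hγl j)).le
    · simpa using Λ.neg_mem hγ

def weight (x : Fin n → ℤ) : ℕ := ∑ j, (x j).toNat

lemma weight_add {x y : Fin n → ℤ} (hx : 0 ≤ x) (hy : 0 ≤ y) :
    weight (x + y) = weight x + weight y := by
  rw [weight, weight, weight, ← Finset.sum_add_distrib]
  exact Finset.sum_congr rfl fun j _ => Int.toNat_add (hx j) (hy j)

lemma weight_pos {m : Fin n → ℤ} (hm : 0 ≤ m) (hm0 : m ≠ 0) : 0 < weight m := by
  obtain ⟨j, hj⟩ := (Pi.lt_def.mp (lt_of_le_of_ne hm (Ne.symm hm0))).2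
  exact Finset.sum_pos' (fun _ _ => Nat.zero_le _) ⟨j, Finset.mem_univ j, by simpa using hj⟩

noncomputable def fiberWeight (Λ : AddSubgroup (Fin n → ℤ)) (u : Fin n → ℤ) : ℕ :=
  ∑ᶠ x ∈ fiber Λ u, weight x

lemma IsAntichainLattice.fiberWeight_lt_fiberWeight_add (hΛ : IsAntichainLattice Λ)
    {u m : Fin n → ℤ} (hu : 0 ≤ u) (hm : 0 ≤ m) (hm0 : m ≠ 0) :
    fiberWeight Λ u < fiberWeight Λ (u + m) := by
  classical
  set S := (hΛ.finite_fiber u).toFinset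
  set T := (hΛ.finite_fiber (u + m)).toFinset
  rw [fiberWeight, fiberWeight, finsum_mem_eq_finite_toFinset_sum _ (hΛ.finite_fiber u),
    finsum_mem_eq_finite_toFinset_sum _ (hΛ.finite_fiber (u + m))]
  calc ∑ x ∈ S, weight x < ∑ x ∈ S, weight (x + m) := by
        refine Finset.sum_lt_sum_of_nonempty ⟨u, by simpa [S] using mem_fiber_self hu⟩
          fun x hx => ?_
        rw [weight_add ((Set.Finite.mem_toFinset _).mp hx).1 hm]
        exact Nat.lt_add_of_pos_right (weight_pos hm hm0)
    _ = ∑ x ∈ S.map (addRightEmbedding m), weight x := by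
        rw [Finset.sum_map]
        rfl
    _ ≤ ∑ x ∈ T, weight x := Finset.sum_le_sum_of_subset fun y hy => by
        obtain ⟨x, hx, rfl⟩ := Finset.mem_map.mp hy
        simpa [S, T] using add_mem_fiber_add (by simpa [S] using hx) hm

structure NonGenericWitness (Λ : AddSubgroup (Fin n → ℤ)) (v w : Fin n → ℤ) (i : Fin n) :
    Prop where
  nonneg : 0 ≤ v
  mem_fiber : w ∈ fiber Λ v
  ne : v ≠ w
  left_apply : v i = 0
  right_apply : w i = 0
  exists_eq_zero : ∀ x ∈ fiber Λ v, ∃ j, x j = 0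

lemma generic_of_forall_not_nonGenericWitness (h : ∀ v w i, ¬ NonGenericWitness Λ v w i) :
    Generic (Λ : Set (Fin n → ℤ)) := by
  intro η hη i α hα β hβ hαη hαi hβη hβi
  by_contra hne
  refine h (η - α) (η - β) i ⟨sub_nonneg.mpr hαη, ⟨sub_nonneg.mpr hβη, ?_⟩,
    fun h => hne (sub_right_injective h), by simp [hαi], by simp [hβi], ?_⟩
  · simpa using Λ.sub_mem hα hβ
  · rintro x ⟨hx0, hx⟩
    by_contra! hpos
    refine hη (η - x) ?_ fun j => sub_lt_self _ ((hx0 j).lt_of_ne' (hpos j))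
    rw [SetLike.mem_coe, show η - x = α - (x - (η - α)) by abel]
    exact Λ.sub_mem hα hx

lemma NonGenericWitness.sub_inf {v w : Fin n → ℤ} {i : Fin n} (h : NonGenericWitness Λ v w i) :
    NonGenericWitness Λ (v - v ⊓ w) (w - v ⊓ w) i := by
  have hm : 0 ≤ v ⊓ w := le_inf h.nonneg h.mem_fiber.1
  refine ⟨sub_nonneg.mpr inf_le_left,
    ⟨fun j => sub_nonneg.mpr ((inf_le_right : v ⊓ w ≤ w) j), by simpa using h.mem_fiber.2⟩,
    fun he => h.ne (sub_left_injective he), by simp [h.left_apply, h.mem_fiber.1 i],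
    by simpa [h.right_apply] using h.nonneg i,
    fun x hx => ?_⟩
  obtain ⟨j, hj⟩ := h.exists_eq_zero (x + v ⊓ w) (by simpa using add_mem_fiber_add hx hm)
  have hmj : 0 ≤ (v ⊓ w) j := hm j
  exact ⟨j, by linarith [hx.1 j, (Pi.add_apply x (v ⊓ w) j).symm.trans hj]⟩

/-- With disjoint supports, a full-support move out of `v` lands on a zero coordinate of the fiber,
which is positive in `v` and hence zero in `w`. -/
lemma NonGenericWitness.of_markovStep (hfull : ∀ l ∈ L, ∀ i, l i ≠ 0) {v w x : Fin n → ℤ}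
    {i : Fin n} (h : NonGenericWitness Λ v w i) (hvw : v ⊓ w = 0)
    (hx : MarkovStep (fiber Λ v) L v x) : ∃ k, NonGenericWitness Λ x w k := by
  have hne : ∀ j, x j ≠ v j := fun j hj => by
    rcases hx.2.2 with hl | hl
    · exact hfull _ hl j (by simp [hj])
    · exact hfull _ hl j (by simp [hj])
  have hfib : fiber Λ x = fiber Λ v := fiber_eq_of_mem hx.2.1
  obtain ⟨k, hk⟩ := h.exists_eq_zero x hx.2.1
  have hwk : w k = 0 := by
    have hmin : min (v k) (w k) = 0 := congrFun hvw k
    have hvk : v k ≠ 0 := fun h0 => hne k (hk.trans h0.symm)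
    have := h.mem_fiber.1 k
    omega
  refine ⟨k, hx.2.1.1, hfib ▸ h.mem_fiber, fun hxw => hne i ?_, hk, hwk, hfib ▸ h.exists_eq_zero⟩
  rw [h.left_apply, hxw, h.right_apply]

lemma IsMarkovBasis.not_nonGenericWitness (hΛ : IsAntichainLattice Λ) (hL : IsMarkovBasis Λ L)
    (hfull : ∀ l ∈ L, ∀ i, l i ≠ 0) {v w : Fin n → ℤ} {i : Fin n} :
    ¬ NonGenericWitness Λ v w i := by
  intro h
  induction hN : fiberWeight Λ v using Nat.strong_induction_on generalizing v w i with
  | _ N ih =>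
    have hv := mem_fiber_self (Λ := Λ) h.nonneg
    suffices key : ∀ x, ReflTransGen (MarkovStep (fiber Λ v) L) x w → x ∈ fiber Λ v →
        ∀ k, ¬ NonGenericWitness Λ x w k from
      key v (hL.reflTransGen h.nonneg hv h.mem_fiber) hv i h
    intro x hxw
    induction hxw using ReflTransGen.head_induction_on with
    | refl => exact fun _ k hW => hW.ne rfl
    | @head a c hac _ ihc =>
      intro ha k hW
      have hfa : fiber Λ a = fiber Λ v := fiber_eq_of_mem ha
      by_cases hm : a ⊓ w = 0
      · obtain ⟨k', hW'⟩ := hW.of_markovStep hfull hm (hfa ▸ hac)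
        exact ihc hac.2.1 k' hW'
      · refine ih _ ?_ hW.sub_inf rfl
        have := hΛ.fiberWeight_lt_fiberWeight_add hW.sub_inf.nonneg
          (le_inf hW.nonneg hW.mem_fiber.1) hm
        have haN : fiberWeight Λ a = N := by rw [← hN, fiberWeight, hfa, fiberWeight]
        rwa [sub_add_cancel, haN] at this

lemma IsMarkovBasis.generic_of_forall_apply_ne_zero (hΛ : IsAntichainLattice Λ)
    (hL : IsMarkovBasis Λ L) (hfull : ∀ l ∈ L, ∀ i, l i ≠ 0) :
    Generic (Λ : Set (Fin n → ℤ)) :=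
  generic_of_forall_not_nonGenericWitness fun _ _ _ => hL.not_nonGenericWitness hΛ hfull

end

theorem stmt6 {n : ℕ} (Λ : AddSubgroup (Fin n → ℤ)) (hΛ : IsAntichainLattice Λ)
    (hex : ∃ B : Finset (Fin n → ℤ), IsMarkovBasis Λ B) :
    Generic (Λ : Set (Fin n → ℤ)) ↔
      ∃ L : Finset (Fin n → ℤ), IsMinimalMarkovBasis Λ L ∧ ∀ l ∈ L, ∀ i, l i ≠ 0 := by
  constructor
  · intro hG
    obtain ⟨L, hL⟩ := exists_isMinimalMarkovBasis hex
    exact ⟨L, hL, fun l hl i => hL.apply_ne_zero_of_generic hΛ hG hl i⟩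
  · rintro ⟨L, hL, hfull⟩
    exact hL.1.generic_of_forall_apply_ne_zero hΛ hfull
end

section
/- Let Λ ⊆ ℤⁿ be an antichain lattice and A ⊆ ℤⁿ a generic Λ-finite set. For i ≥ 0 let N_i(A) be the collection of strongly neighborly subsets of A of cardinality i + 1. Then: (a) for every σ ∈ N_i(A) and λ ∈ Λ, the translate σ + λ = {α + λ : α ∈ σ} belongs to N_i(A); and (b) N_i(A) has only finitely many orbits under this Λ-action, i.e., there is a finite collection σ₁, …, σ_m ∈ N_i(A) such that every σ ∈ N_i(A) equals σ_j + λ for some j and some λ ∈ Λ. -/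
/-- `A ⊆ ℤⁿ` is `Λ`-finite: `A = A₀ + Λ` for a finite `A₀ ⊆ A` whose elements lie in
pairwise distinct cosets of `Λ`. -/
def LambdaFinite {n : ℕ} (Λ : AddSubgroup (Fin n → ℤ)) (A : Set (Fin n → ℤ)) : Prop :=
  ∃ A₀ : Finset (Fin n → ℤ), ↑A₀ ⊆ A ∧
    A = {x : Fin n → ℤ | ∃ a ∈ A₀, ∃ l ∈ Λ, x = a + l} ∧
    ∀ a ∈ A₀, ∀ b ∈ A₀, a - b ∈ Λ → a = b


/-!
A strongly neighborly set `σ` is recovered from `∨σ` as `{α ∈ A | α ≤ ∨σ}`: adjoining such an `α`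
does not change the maximum. Hence `∨σ ≤ ∨τ` forces `σ ⊆ τ`, so the maxima of the strongly
neighborly sets of a fixed cardinality form an antichain. Those containing a fixed point `a` have
their maxima in the orthant above `a`, which is partially well ordered by Dickson's lemma, so there
are only finitely many of them. Since every element of `A` is a translate of one of the finitely
many points of `A₀`, this gives finitely many orbits under translation by `Λ`.
-/

section Vee

variable {n : ℕ}

theorem vee_eq_sup' {B : Finset (Fin n → ℤ)} (hB : B.Nonempty) : vee B = B.sup' hB id := by
  funext j
  rw [Finset.sup'_apply, vee, ← Finset.coe_max' (hB.image _), WithBot.unbotD_coe,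
    Finset.max'_eq_sup', Finset.sup'_image]
  rfl

theorem vee_image_add {B : Finset (Fin n → ℤ)} (hB : B.Nonempty) (l : Fin n → ℤ) :
    vee (B.image (· + l)) = vee B + l := by
  rw [vee_eq_sup' (hB.image _), vee_eq_sup' hB, Finset.sup'_image]
  exact (map_finset_sup' (OrderIso.addRight l) hB id).symm

theorem vee_insert_of_le {B : Finset (Fin n → ℤ)} (hB : B.Nonempty) {α : Fin n → ℤ}
    (hα : α ≤ vee B) : vee (insert α B) = vee B := by
  rw [vee_eq_sup' (Finset.insert_nonempty α B), Finset.sup'_insert hB, ← vee_eq_sup' hB]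
  exact sup_eq_right.mpr hα

end Vee

theorem Finset.image_add_image_add_neg {G : Type*} [AddGroup G] [DecidableEq G] (s : Finset G)
    (l : G) : (s.image (· + -l)).image (· + l) = s := by
  rw [Finset.image_image]
  simp [Function.comp_def]

namespace StronglyNeighborly

variable {n : ℕ} {A : Set (Fin n → ℤ)} {σ τ : Finset (Fin n → ℤ)}

theorem eq_of_vee_eq (hσ : StronglyNeighborly A σ) (hτ : StronglyNeighborly A τ)
    (h : vee σ = vee τ) : σ = τ :=
  hτ.2.2 σ hσ.1 hσ.2.1 h

theorem mem_of_le_vee (hσ : StronglyNeighborly A σ) {α : Fin n → ℤ} (hα : α ∈ A)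
    (hle : α ≤ vee σ) : α ∈ σ := by
  have hins : insert α σ = σ := by
    refine hσ.2.2 _ (Finset.insert_nonempty α σ) ?_ (vee_insert_of_le hσ.1 hle)
    rw [Finset.coe_insert]
    exact Set.insert_subset hα hσ.2.1
  exact hins ▸ Finset.mem_insert_self α σ

theorem subset_of_vee_le (hσ : StronglyNeighborly A σ) (hτ : StronglyNeighborly A τ)
    (h : vee σ ≤ vee τ) : σ ⊆ τ := by
  intro α hα
  refine hτ.mem_of_le_vee (hσ.2.1 hα) (le_trans ?_ h)
  rw [vee_eq_sup' hσ.1]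
  exact Finset.le_sup' id hα

theorem image_add {l : Fin n → ℤ} (hA : ∀ x, x + l ∈ A ↔ x ∈ A)
    (hσ : StronglyNeighborly A σ) : StronglyNeighborly A (σ.image (· + l)) := by
  have hA' : ∀ x, x + -l ∈ A ↔ x ∈ A := fun x => by
    simpa using (hA (x + -l)).symm
  refine ⟨hσ.1.image _, ?_, fun B hB hBA hvee => ?_⟩
  · rw [Finset.coe_image]
    rintro _ ⟨x, hx, rfl⟩
    exact (hA x).mpr (hσ.2.1 hx)
  · have hback : B.image (· + -l) = σ := by
      refine hσ.2.2 _ (hB.image _) ?_ ?_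
      · rw [Finset.coe_image]
        rintro _ ⟨x, hx, rfl⟩
        exact (hA' x).mpr (hBA hx)
      · rw [vee_image_add hB, hvee, vee_image_add hσ.1, add_neg_cancel_right]
    rw [← hback, Finset.image_add_image_add_neg]

end StronglyNeighborly

theorem Set.isPWO_Ici_int {ι : Type*} [Finite ι] (a : ι → ℤ) : (Set.Ici a).IsPWO := by
  have hrange : Set.Ici a = (fun x : ι → ℕ => a + fun j => (x j : ℤ)) '' Set.univ := by
    ext y
    refine ⟨fun hy => ⟨fun j => (y j - a j).toNat, trivial, ?_⟩, ?_⟩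
    · funext j
      have : a j ≤ y j := Set.mem_Ici.mp hy j
      simp only [Pi.add_apply]
      omega
    · rintro ⟨x, -, rfl⟩ j
      simp
  rw [hrange]
  refine (Set.isPWO_of_wellQuasiOrderedLE _).image_of_monotone fun x y hxy j => ?_
  simpa using hxy j

theorem finite_setOf_stronglyNeighborly_card_mem {n : ℕ} (A : Set (Fin n → ℤ)) (k : ℕ)
    (a : Fin n → ℤ) :
    {σ : Finset (Fin n → ℤ) | StronglyNeighborly A σ ∧ σ.card = k ∧ a ∈ σ}.Finite := by
  set S := {σ : Finset (Fin n → ℤ) | StronglyNeighborly A σ ∧ σ.card = k ∧ a ∈ σ}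
  have hinj : Set.InjOn vee S := fun σ hσ τ hτ h => hσ.1.eq_of_vee_eq hτ.1 h
  have hIci : vee '' S ⊆ Set.Ici a := by
    rintro _ ⟨σ, hσ, rfl⟩
    rw [Set.mem_Ici, vee_eq_sup' hσ.1.1]
    exact Finset.le_sup' id hσ.2.2
  have hanti : IsAntichain (· ≤ ·) (vee '' S) := by
    rintro _ ⟨σ, hσ, rfl⟩ _ ⟨τ, hτ, rfl⟩ hne hle
    refine hne (congrArg vee (Finset.eq_of_subset_of_card_le ?_ ?_))
    · exact hσ.1.subset_of_vee_le hτ.1 hle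
    · rw [hσ.2.1, hτ.2.1]
  exact Set.Finite.of_finite_image
    (hanti.finite_of_partiallyWellOrderedOn ((Set.isPWO_Ici_int a).mono hIci)) hinj

theorem LambdaFinite.add_mem_iff {n : ℕ} {Λ : AddSubgroup (Fin n → ℤ)} {A : Set (Fin n → ℤ)}
    (hA : LambdaFinite Λ A) {l : Fin n → ℤ} (hl : l ∈ Λ) (x : Fin n → ℤ) :
    x + l ∈ A ↔ x ∈ A := by
  obtain ⟨A₀, -, rfl, -⟩ := hA
  constructor
  · rintro ⟨a, ha, m, hm, hx⟩
    exact ⟨a, ha, m - l, sub_mem hm hl, by rw [← add_sub_cancel_right x l, hx]; abel⟩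
  · rintro ⟨a, ha, m, hm, rfl⟩
    exact ⟨a, ha, m + l, add_mem hm hl, by abel⟩

theorem stmt8_general {n : ℕ} (Λ : AddSubgroup (Fin n → ℤ))
    (A : Set (Fin n → ℤ)) (hA : LambdaFinite Λ A) (i : ℕ) :
    (∀ σ : Finset (Fin n → ℤ), StronglyNeighborly A σ → σ.card = i + 1 →
      ∀ l ∈ Λ, StronglyNeighborly A (σ.image (· + l)) ∧ (σ.image (· + l)).card = i + 1) ∧
    ∃ R : Finset (Finset (Fin n → ℤ)),
      (∀ τ ∈ R, StronglyNeighborly A τ ∧ τ.card = i + 1) ∧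
      ∀ σ : Finset (Fin n → ℤ), StronglyNeighborly A σ → σ.card = i + 1 →
        ∃ τ ∈ R, ∃ l ∈ Λ, σ = τ.image (· + l) := by
  have htrans : ∀ σ : Finset (Fin n → ℤ), StronglyNeighborly A σ → σ.card = i + 1 →
      ∀ l ∈ Λ, StronglyNeighborly A (σ.image (· + l)) ∧ (σ.image (· + l)).card = i + 1 :=
    fun σ hσ hcard l hl => ⟨hσ.image_add (hA.add_mem_iff hl),
      by rw [Finset.card_image_of_injective _ (add_left_injective l), hcard]⟩
  refine ⟨htrans, ?_⟩
  obtain ⟨A₀, -, hAeq, -⟩ := hA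
  have hfin : (⋃ a ∈ A₀, {σ | StronglyNeighborly A σ ∧ σ.card = i + 1 ∧ a ∈ σ}).Finite :=
    A₀.finite_toSet.biUnion fun a _ => finite_setOf_stronglyNeighborly_card_mem A (i + 1) a
  refine ⟨hfin.toFinset, fun τ hτ => ?_, fun σ hσ hcard => ?_⟩
  · obtain ⟨a, -, hτ, hcard, -⟩ := Set.mem_iUnion₂.mp (hfin.mem_toFinset.mp hτ)
    exact ⟨hτ, hcard⟩
  · obtain ⟨α, hα⟩ := hσ.1
    have hαA : α ∈ A := hσ.2.1 hα
    rw [hAeq] at hαA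
    obtain ⟨a, ha, l, hl, rfl⟩ := hαA
    obtain ⟨hτ, hτcard⟩ := htrans σ hσ hcard (-l) (neg_mem hl)
    have haτ : a ∈ σ.image (· + -l) := Finset.mem_image.mpr ⟨a + l, hα, add_neg_cancel_right a l⟩
    exact ⟨σ.image (· + -l), hfin.mem_toFinset.mpr (Set.mem_biUnion ha ⟨hτ, hτcard, haτ⟩), l, hl,
      (Finset.image_add_image_add_neg σ l).symm⟩

theorem stmt8 {n : ℕ} (Λ : AddSubgroup (Fin n → ℤ)) (hΛ : IsAntichainLattice Λ)
    (A : Set (Fin n → ℤ)) (hA : LambdaFinite Λ A) (hgen : Generic A) (i : ℕ) :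
    (∀ σ : Finset (Fin n → ℤ), StronglyNeighborly A σ → σ.card = i + 1 →
      ∀ l ∈ Λ, StronglyNeighborly A (σ.image (· + l)) ∧ (σ.image (· + l)).card = i + 1) ∧
    ∃ R : Finset (Finset (Fin n → ℤ)),
      (∀ τ ∈ R, StronglyNeighborly A τ ∧ τ.card = i + 1) ∧
      ∀ σ : Finset (Fin n → ℤ), StronglyNeighborly A σ → σ.card = i + 1 →
        ∃ τ ∈ R, ∃ l ∈ Λ, σ = τ.image (· + l) :=
  stmt8_general Λ A hA i
end

section
/- Let Λ ⊆ ℤⁿ be an antichain lattice and A ⊆ ℤⁿ a generic Λ-finite set. Then for every α ∈ A, the set of neighbors of α, namely {β ∈ A : β ≠ α and {α, β} is neighborly in A}, is finite. -/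
/-! If `γ` is a neighbor of `α`, genericity leaves only `α` and `γ` among the elements of `A`
below `∨{α, γ}`. Hence two distinct neighbors `β, γ` of `α` never satisfy `(β - α)⁺ ≤ (γ - α)⁺`:
these positive parts form an antichain in `ℕⁿ`, which is finite by Dickson's lemma. -/

lemma vee_pair_apply {n : ℕ} (α β : Fin n → ℤ) (i : Fin n) :
    vee {α, β} i = max (α i) (β i) := by
  rw [vee, Finset.image_insert, Finset.image_singleton, Finset.max_insert, Finset.max_singleton,
    ← WithBot.coe_max, WithBot.unbotD_coe]

lemma left_le_vee_pair {n : ℕ} (α β : Fin n → ℤ) : α ≤ vee {α, β} := fun i => by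
  rw [vee_pair_apply]
  exact le_max_left _ _

lemma right_le_vee_pair {n : ℕ} (α β : Fin n → ℤ) : β ≤ vee {α, β} := fun i => by
  rw [vee_pair_apply]
  exact le_max_right _ _

lemma le_vee_pair_of_toNat_sub_le {n : ℕ} {α β γ : Fin n → ℤ}
    (h : (fun i => (β i - α i).toNat) ≤ fun i => (γ i - α i).toNat) : β ≤ vee {α, γ} := fun i => by
  have hi : (β i - α i).toNat ≤ (γ i - α i).toNat := h i
  simp only [vee_pair_apply, le_max_iff]
  omega

lemma Generic.eq_or_eq_of_le_vee_pair {n : ℕ} {A : Set (Fin n → ℤ)} (hgen : Generic A)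
    {α β γ : Fin n → ℤ} (hαγ : Neighborly A {α, γ}) (hβ : β ∈ A) (hle : β ≤ vee {α, γ}) :
    β = α ∨ β = γ := by
  obtain ⟨-, hsub, hfree⟩ := hαγ
  obtain ⟨i, hi⟩ : ∃ i, vee {α, γ} i ≤ β i := by simpa [Dom] using hfree β hβ
  have hβi : β i = vee {α, γ} i := le_antisymm (hle i) hi
  rcases max_choice (α i) (γ i) with hmax | hmax
  · refine .inl (hgen _ hfree i β hβ α (hsub (by simp)) hle hβi (left_le_vee_pair α γ) ?_)
    rw [vee_pair_apply, hmax]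
  · refine .inr (hgen _ hfree i β hβ γ (hsub (by simp)) hle hβi (right_le_vee_pair α γ) ?_)
    rw [vee_pair_apply, hmax]

theorem stmt9_general {n : ℕ}
    (A : Set (Fin n → ℤ)) (hgen : Generic A) :
    ∀ α ∈ A, {β : Fin n → ℤ | β ∈ A ∧ β ≠ α ∧ Neighborly A {α, β}}.Finite := by
  intro α _
  let excess : (Fin n → ℤ) → Fin n → ℕ := fun β i => (β i - α i).toNat
  refine IsAntichain.finite_of_wellQuasiOrdered (r := fun β γ => excess β ≤ excess γ) ?_
    fun f => wellQuasiOrdered_le (excess ∘ f)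
  rintro β ⟨hβ, hβα, -⟩ γ ⟨-, -, hαγ⟩ hβγ hle
  rcases hgen.eq_or_eq_of_le_vee_pair hαγ hβ (le_vee_pair_of_toNat_sub_le hle) with h | h
  exacts [hβα h, hβγ h]

theorem stmt9 {n : ℕ} (Λ : AddSubgroup (Fin n → ℤ)) (hΛ : IsAntichainLattice Λ)
    (A : Set (Fin n → ℤ)) (hA : LambdaFinite Λ A) (hgen : Generic A) :
    ∀ α ∈ A, {β : Fin n → ℤ | β ∈ A ∧ β ≠ α ∧ Neighborly A {α, β}}.Finite :=
  stmt9_general A hgen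
end

section
/- Let Λ ⊆ ℤⁿ be an antichain lattice and A ⊆ ℤⁿ a generic Λ-finite set. Then there exists T ∈ ℝ (for instance any T > (n+1)!) such that for all real t, t′ ≥ T and every nonempty finite σ ⊆ A: conv(E_t(σ)) is an exposed face of P_t(A) if and only if conv(E_{t′}(σ)) is an exposed face of P_{t′}(A). In other words, the hull complex hull_t(A) is independent of t for t ≥ T. -/
open scoped Pointwise

/-- `E_t(α) = (t^{α₁}, …, t^{αₙ}) ∈ ℝⁿ`. -/
noncomputable def Et {n : ℕ} (t : ℝ) (α : Fin n → ℤ) : Fin n → ℝ := fun i => t ^ (α i)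

/-- The polyhedron `P_t(A) = conv(E_t(A)) + [0,∞)ⁿ`. -/
noncomputable def Pt {n : ℕ} (t : ℝ) (A : Set (Fin n → ℤ)) : Set (Fin n → ℝ) :=
  convexHull ℝ (Et t '' A) + {x : Fin n → ℝ | ∀ i, 0 ≤ x i}

/-- `F` is an exposed face of `C`: `F` is the set of points of `C` maximizing some
linear functional `l` over `C`. -/
def IsExposedFace {n : ℕ} (C F : Set (Fin n → ℝ)) : Prop :=
  ∃ l : (Fin n → ℝ) →ₗ[ℝ] ℝ, F = {x ∈ C | ∀ y ∈ C, l y ≤ l x}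


/-! For `t > n`, a functional exposing `conv E_t(σ)` in `P_t(A)` is `-w` for a weight `w ≥ 0`,
`w ≠ 0`, that is constant, say `m > 0`, on `E_t(σ)` and at least `m` on `E_t(A)`; a point
`α ≪ ∨σ` would weigh at most `n m / t < m`, so `σ` is neighborly. Conversely, let `σ` be
neighborly in the generic set `A`, with `η = ∨σ`. Genericity makes every `β ∈ σ` attain `η` in
some coordinate, and the points of `A` below `η` are exactly those of `σ`. Choosing `φ i ∈ σ`
with `(φ i) i = η i`, the weight `w i = c (φ i) t^(-η i)` is `1` on `E_t(σ)` iff `c`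
solves a linear system whose diagonal entries are at least `1` and whose off-diagonal part is
`O(n / t)`. For `t ≥ 4n + 4` its solution is positive and of size about `1/n`, so every
`α ∈ A \ σ`, having `α i > η i` for some `i`, weighs more than `1`. Hence for `t ≥ 4n + 4` the
exposed faces of `P_t(A)` spanned by `σ` are those with `σ` neighborly, independently of `t`. -/

open Finset

lemma mem_convexHull_sep_of_le {E : Type*} [AddCommGroup E] [Module ℝ E] {S : Set E}
    {g : E →ₗ[ℝ] ℝ} {c : ℝ} (hS : ∀ y ∈ S, c ≤ g y) {x : E} (hx : x ∈ convexHull ℝ S)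
    (hxc : g x ≤ c) : x ∈ convexHull ℝ {y ∈ S | g y = c} := by
  set S₁ := {y ∈ S | g y = c}
  set S₂ := {y ∈ S | c < g y}
  have hS₂ : convexHull ℝ S₂ ⊆ {y | c < g y} :=
    convexHull_min (fun y hy => hy.2) (convex_halfSpace_gt g.isLinear c)
  have hunion : S = S₁ ∪ S₂ := by
    ext y
    simp only [S₁, S₂, Set.mem_union, Set.mem_ofPred_eq, ← and_or_left]
    exact ⟨fun hy => ⟨hy, (hS y hy).eq_or_lt.imp Eq.symm id⟩, And.left⟩
  rcases S₂.eq_empty_or_nonempty with h₂ | h₂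
  · rwa [hunion, h₂, Set.union_empty] at hx
  rcases S₁.eq_empty_or_nonempty with h₁ | h₁
  · rw [hunion, h₁, Set.empty_union] at hx
    exact absurd hxc (not_le.mpr (hS₂ hx))
  rw [hunion, convexHull_union h₁ h₂, mem_convexJoin] at hx
  obtain ⟨a, ha, b, hb, p, q, hp, hq, hpq, rfl⟩ := hx
  have hga : g a = c := convexHull_min (fun y hy => hy.2) (convex_hyperplane g.isLinear c) ha
  have hq0 : q = 0 := by
    obtain rfl : p = 1 - q := by linarith
    simp only [map_add, map_smul, smul_eq_mul, hga] at hxc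
    by_contra hq0
    nlinarith [mul_pos (hq.lt_of_ne' hq0) (sub_pos.mpr (hS₂ hb))]
  rwa [hq0, zero_smul, add_zero, show p = 1 by linarith, one_smul]

lemma eq_zero_of_dotProduct_nonpos {ι : Type*} [Fintype ι] {w q : ι → ℝ} (hw : ∀ i, 0 < w i)
    (hq : 0 ≤ q) (h : w ⬝ᵥ q ≤ 0) : q = 0 := by
  have hterm : ∀ i ∈ univ, 0 ≤ w i * q i := fun i _ => mul_nonneg (hw i).le (hq i)
  have hzero := (sum_eq_zero_iff_of_nonneg hterm).mp (h.antisymm (sum_nonneg hterm))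
  funext i
  exact (mul_eq_zero.mp (hzero i (mem_univ i))).resolve_left (hw i).ne'

lemma LinearMap.apply_eq_dotProduct {ι : Type*} [Fintype ι] [DecidableEq ι]
    (l : (ι → ℝ) →ₗ[ℝ] ℝ) (x : ι → ℝ) : l x = (fun i => l (Pi.single i 1)) ⬝ᵥ x := by
  conv_lhs => rw [← (dotProductEquiv ℝ ι).apply_symm_apply l]
  rfl

lemma LinearMap.exists_apply_eq_one_of_near_diagonal {ι : Type*} [Fintype ι]
    (f : (ι → ℝ) →ₗ[ℝ] ι → ℝ) {d : ι → ℝ} (hd : ∀ i, 1 ≤ d i)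
    (hf : ∀ c i, |f c i - d i * c i| ≤ ‖c‖ / 4) :
    ∃ c, f c = 1 ∧ ∀ i, 2 / 3 ≤ d i * c i := by
  have hcoord : ∀ c i, ‖c i‖ ≤ |f c i| + ‖c‖ / 4 := fun c i => by
    have h₁ : |c i| ≤ |d i * c i| := by
      rw [abs_mul, abs_of_pos (show 0 < d i by linarith [hd i])]
      exact le_mul_of_one_le_left (abs_nonneg _) (hd i)
    have h₂ := abs_sub_abs_le_abs_sub (d i * c i) (f c i)
    rw [abs_sub_comm] at h₂
    rw [Real.norm_eq_abs]
    linarith [hf c i]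
  have hinj : Function.Injective f := by
    refine (injective_iff_map_eq_zero f).mpr fun c hc => norm_le_zero_iff.mp ?_
    have : ‖c‖ ≤ ‖c‖ / 4 := (pi_norm_le_iff_of_nonneg (by positivity)).mpr fun i => by
      simpa [hc] using hcoord c i
    linarith [norm_nonneg c]
  obtain ⟨c, hc⟩ := LinearMap.injective_iff_surjective.mp hinj 1
  have hnorm : ‖c‖ ≤ 1 + ‖c‖ / 4 :=
    (pi_norm_le_iff_of_nonneg (by positivity)).mpr fun i => by simpa [hc] using hcoord c i
  refine ⟨c, hc, fun i => ?_⟩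
  have := (abs_le.mp (hf c i)).2
  rw [hc, Pi.one_apply] at this
  linarith

lemma isExposedFace_convexHull_add_orthant {n : ℕ} {S S' : Set (Fin n → ℝ)} (hS' : S' ⊆ S)
    (hne : S'.Nonempty) {w : Fin n → ℝ} (hw : ∀ i, 0 < w i) (hS'w : ∀ x ∈ S', w ⬝ᵥ x = 1)
    (hSw : ∀ x ∈ S \ S', 1 < w ⬝ᵥ x) :
    IsExposedFace (convexHull ℝ S + {x | ∀ i, 0 ≤ x i}) (convexHull ℝ S') := by
  set g := dotProductBilin ℝ ℝ w
  have hSg : ∀ x ∈ S, 1 ≤ g x := fun x hx => by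
    by_cases hx' : x ∈ S'
    exacts [(hS'w x hx').ge, (hSw x ⟨hx, hx'⟩).le]
  have hS'g : ∀ x ∈ convexHull ℝ S', g x = 1 :=
    fun x hx => convexHull_min hS'w (convex_hyperplane g.isLinear 1) hx
  have hconv : ∀ x ∈ convexHull ℝ S, 1 ≤ g x :=
    fun x hx => convexHull_min hSg (convex_halfSpace_ge g.isLinear 1) hx
  have horth : ∀ q : Fin n → ℝ, 0 ≤ q → 0 ≤ g q :=
    fun q hq => show 0 ≤ w ⬝ᵥ q from sum_nonneg fun i _ => mul_nonneg (hw i).le (hq i)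
  have hmem : ∀ x ∈ convexHull ℝ S, x ∈ convexHull ℝ S + {x | ∀ i, 0 ≤ x i} :=
    fun x hx => ⟨x, hx, 0, fun _ => le_rfl, add_zero x⟩
  refine ⟨-g, Set.Subset.antisymm ?_ ?_⟩
  · intro x hx
    refine ⟨hmem x (convexHull_mono hS' hx), fun y hy => ?_⟩
    obtain ⟨p, hp, q, hq, rfl⟩ := Set.mem_add.mp hy
    simp only [LinearMap.neg_apply, map_add]
    linarith [hconv p hp, horth q hq, hS'g x hx]
  · rintro x ⟨hx, hmax⟩
    obtain ⟨p, hp, q, hq, rfl⟩ := Set.mem_add.mp hx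
    obtain ⟨s, hs⟩ := hne
    have hle := hmax s (hmem s (subset_convexHull ℝ S (hS' hs)))
    simp only [LinearMap.neg_apply, map_add, hS'g s (subset_convexHull ℝ S' hs)] at hle
    obtain rfl : q = 0 :=
      eq_zero_of_dotProduct_nonpos hw hq (by linarith [hconv p hp] : g q ≤ 0)
    rw [add_zero]
    refine convexHull_mono (fun y hy => ?_) (mem_convexHull_sep_of_le hSg hp (by simpa using hle))
    by_contra hy'
    exact (hSw y ⟨hy.1, hy'⟩).ne' hy.2

lemma isExposedFace_of_fin_zero {C F : Set (Fin 0 → ℝ)} (hF : F.Nonempty) (hFC : F ⊆ C) :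
    IsExposedFace C F := by
  refine ⟨0, Set.ext fun x => ⟨fun hx => ⟨hFC hx, fun _ _ => le_rfl⟩, fun hx => ?_⟩⟩
  obtain ⟨y, hy⟩ := hF
  exact Subsingleton.elim y x ▸ hy

section Vee

variable {n : ℕ} {σ : Finset (Fin n → ℤ)}

lemma exists_apply_eq_vee (hσ : σ.Nonempty) (i : Fin n) : ∃ β ∈ σ, β i = vee σ i := by
  have hne := hσ.image fun α => α i
  obtain ⟨β, hβ, hβi⟩ := mem_image.mp (max'_mem _ hne)
  refine ⟨β, hβ, ?_⟩
  simp only [vee, ← coe_max' hne, WithBot.unbotD_coe, hβi]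

lemma le_vee_s14 {β : Fin n → ℤ} (hβ : β ∈ σ) : β ≤ vee σ := fun i => by
  have hne : (σ.image fun α => α i).Nonempty := ⟨β i, mem_image_of_mem _ hβ⟩
  simp only [vee, ← coe_max' hne, WithBot.unbotD_coe]
  exact le_max' _ _ (mem_image_of_mem (fun α => α i) hβ)

end Vee

section Polyhedron

variable {n : ℕ} {t : ℝ} {A : Set (Fin n → ℤ)} {σ : Finset (Fin n → ℤ)}

lemma add_mem_Pt {x q : Fin n → ℝ} (hx : x ∈ Pt t A) (hq : 0 ≤ q) : x + q ∈ Pt t A := by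
  obtain ⟨p, hp, r, hr, rfl⟩ := hx
  exact ⟨p, hp, r + q, fun i => add_nonneg (hr i) (hq i), (add_assoc p r q).symm⟩

lemma convexHull_subset_Pt (hσA : ↑σ ⊆ A) : convexHull ℝ (Et t '' ↑σ) ⊆ Pt t A :=
  fun x hx => ⟨x, convexHull_mono (Set.image_mono hσA) hx, 0, fun _ => le_rfl, add_zero x⟩

lemma Et_mem_Pt {α : Fin n → ℤ} (hα : α ∈ A) : Et t α ∈ Pt t A :=
  ⟨_, subset_convexHull ℝ _ (Set.mem_image_of_mem _ hα), 0, fun _ => le_rfl, add_zero _⟩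

lemma apply_le_of_mem_convexHull_Et (ht : 0 < t) {x : Fin n → ℝ}
    (hx : x ∈ convexHull ℝ (Et t '' ↑σ)) (i : Fin n) : x i ≤ ∑ β ∈ σ, t ^ β i := by
  refine convexHull_min ?_ (convex_halfSpace_le (LinearMap.proj (R := ℝ) i).isLinear _) hx
  rintro _ ⟨β, hβ, rfl⟩
  exact single_le_sum (f := fun γ : Fin n → ℤ => t ^ γ i) (fun γ _ => (zpow_pos ht _).le) hβ

lemma apply_single_nonpos_of_maximizer {l : (Fin n → ℝ) →ₗ[ℝ] ℝ} {x : Fin n → ℝ}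
    (hx : x ∈ Pt t A) (hmax : ∀ y ∈ Pt t A, l y ≤ l x) (i : Fin n) :
    l (Pi.single i 1) ≤ 0 := by
  have := hmax _ (add_mem_Pt hx (Pi.single_nonneg.mpr zero_le_one : 0 ≤ Pi.single i (1 : ℝ)))
  rw [map_add] at this
  linarith

lemma exists_apply_single_neg (hn : 0 < n) (ht : 0 < t) (hσ : σ.Nonempty)
    {l : (Fin n → ℝ) →ₗ[ℝ] ℝ}
    (hl : convexHull ℝ (Et t '' ↑σ) = {x ∈ Pt t A | ∀ y ∈ Pt t A, l y ≤ l x}) :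
    ∃ i, l (Pi.single i 1) < 0 := by
  obtain ⟨β, hβ⟩ := hσ
  have hβF : Et t β ∈ {x ∈ Pt t A | ∀ y ∈ Pt t A, l y ≤ l x} :=
    hl ▸ subset_convexHull ℝ _ (Set.mem_image_of_mem _ hβ)
  -- Otherwise the bounded set `conv E_t(σ)` would contain the ray `E_t(β) + [0, ∞) • eᵢ`.
  by_contra! h
  let i : Fin n := ⟨0, hn⟩
  set B := ∑ γ ∈ σ, t ^ γ i
  have hB : 0 ≤ B := sum_nonneg fun γ _ => (zpow_pos ht _).le
  have hzero : l (Pi.single i B) = 0 := by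
    rw [← mul_one B, ← smul_eq_mul, Pi.single_smul', map_smul,
      (apply_single_nonpos_of_maximizer hβF.1 hβF.2 i).antisymm (h i), smul_zero]
  have hmem : Et t β + Pi.single i B ∈ convexHull ℝ (Et t '' ↑σ) := by
    rw [hl]
    refine ⟨add_mem_Pt hβF.1 (Pi.single_nonneg.mpr hB), fun y hy => ?_⟩
    rw [map_add, hzero, add_zero]
    exact hβF.2 y hy
  have := apply_le_of_mem_convexHull_Et ht hmem i
  simp only [Pi.add_apply, Pi.single_eq_same, Et] at this
  linarith [zpow_pos ht (β i)]

end Polyhedron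

section Exposed

variable {n : ℕ} {t : ℝ} {A : Set (Fin n → ℤ)} {σ : Finset (Fin n → ℤ)}

lemma not_dom_vee_of_weights (hσ : σ.Nonempty) (ht1 : 1 ≤ t) (ht : n < t) {w : Fin n → ℝ}
    (hw : ∀ i, 0 ≤ w i) {m : ℝ} (hm : 0 < m) (hσw : ∀ β ∈ σ, w ⬝ᵥ Et t β = m)
    {α : Fin n → ℤ} (hα : m ≤ w ⬝ᵥ Et t α) : ¬ Dom α (vee σ) := by
  intro hdom
  have ht0 : 0 < t := by linarith
  have hterm : ∀ i, w i * t ^ α i ≤ m / t := fun i => by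
    obtain ⟨β, hβ, hβi⟩ := exists_apply_eq_vee hσ i
    have hβm : w i * t ^ β i ≤ m := hσw β hβ ▸
      single_le_sum (f := fun j => w j * t ^ β j)
        (fun j _ => mul_nonneg (hw j) (zpow_pos ht0 _).le) (mem_univ i)
    calc w i * t ^ α i ≤ w i * t ^ (β i - 1) :=
          mul_le_mul_of_nonneg_left (zpow_le_zpow_right₀ ht1 (by linarith [hdom i])) (hw i)
      _ = w i * t ^ β i / t := by rw [zpow_sub_one₀ ht0.ne', mul_div_assoc, div_eq_mul_inv]
      _ ≤ m / t := by gcongr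
  have hsum : w ⬝ᵥ Et t α ≤ n * (m / t) := by
    have := sum_le_card_nsmul univ (fun i => w i * t ^ α i) _ fun i _ => hterm i
    rwa [card_univ, Fintype.card_fin, nsmul_eq_mul] at this
  have : n * (m / t) < m := by
    rw [mul_div_assoc', div_lt_iff₀ ht0]
    exact (mul_lt_mul_of_pos_right ht hm).trans_eq (mul_comm t m)
  linarith

lemma neighborly_of_isExposedFace (hn : 0 < n) (ht1 : 1 ≤ t) (ht : n < t) (hσ : σ.Nonempty)
    (hσA : ↑σ ⊆ A) (h : IsExposedFace (Pt t A) (convexHull ℝ (Et t '' ↑σ))) :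
    Neighborly A σ := by
  obtain ⟨l, hl⟩ := h
  have hmax : ∀ β ∈ σ, Et t β ∈ Pt t A ∧ ∀ y ∈ Pt t A, l y ≤ l (Et t β) := fun β hβ => by
    have := subset_convexHull ℝ _ (Set.mem_image_of_mem (Et t) hβ)
    rwa [hl] at this
  obtain ⟨β₀, hβ₀⟩ := hσ
  set w : Fin n → ℝ := -fun i => l (Pi.single i 1)
  have hlw : ∀ x, l x = -(w ⬝ᵥ x) := fun x => by
    rw [l.apply_eq_dotProduct, neg_dotProduct, neg_neg]
  have hw : ∀ i, 0 ≤ w i := fun i =>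
    neg_nonneg.mpr (apply_single_nonpos_of_maximizer (hmax β₀ hβ₀).1 (hmax β₀ hβ₀).2 i)
  obtain ⟨i, hi⟩ := exists_apply_single_neg hn (by linarith) ⟨β₀, hβ₀⟩ hl
  have hm : 0 < w ⬝ᵥ Et t β₀ :=
    (mul_pos (neg_pos.mpr hi) (zpow_pos (by linarith) (β₀ i))).trans_le
      (single_le_sum (f := fun j => w j * t ^ β₀ j)
        (fun j _ => mul_nonneg (hw j) (zpow_pos (by linarith) _).le) (mem_univ i))
  have hσw : ∀ β ∈ σ, w ⬝ᵥ Et t β = w ⬝ᵥ Et t β₀ := fun β hβ => by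
    have h₁ := (hmax β hβ).2 _ (hmax β₀ hβ₀).1
    have h₂ := (hmax β₀ hβ₀).2 _ (hmax β hβ).1
    rw [hlw, hlw] at h₁ h₂
    linarith
  refine ⟨⟨β₀, hβ₀⟩, hσA, fun α hα => not_dom_vee_of_weights ⟨β₀, hβ₀⟩ ht1 ht hw hm hσw ?_⟩
  have := (hmax β₀ hβ₀).2 _ (Et_mem_Pt hα)
  rw [hlw, hlw] at this
  linarith

end Exposed

lemma abs_sum_filter_mul_zpow_le {ι : Type*} [Fintype ι] [DecidableEq ι] {n : ℕ} {t : ℝ}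
    (ht1 : 1 < t) (φ : Fin n → ι) (β : ι) {e : Fin n → ℤ} (he : ∀ i, φ i ≠ β → e i < 0)
    (c : ι → ℝ) : |∑ i with φ i ≠ β, c (φ i) * t ^ e i| ≤ n * (‖c‖ / t) := by
  have ht0 : 0 < t := by linarith
  have hterm : ∀ i ∈ ({i | φ i ≠ β} : Finset (Fin n)), |c (φ i) * t ^ e i| ≤ ‖c‖ / t :=
    fun i hi => by
      rw [abs_mul, abs_of_pos (zpow_pos ht0 _), div_eq_mul_inv, ← zpow_neg_one]
      exact mul_le_mul (norm_le_pi_norm c _)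
        (zpow_le_zpow_right₀ ht1.le (by linarith [he i (mem_filter.mp hi).2]))
        (zpow_pos ht0 _).le (norm_nonneg c)
  calc |∑ i with φ i ≠ β, c (φ i) * t ^ e i|
      ≤ #{i | φ i ≠ β} • (‖c‖ / t) :=
        (abs_sum_le_sum_abs _ _).trans (sum_le_card_nsmul _ _ _ hterm)
    _ ≤ n * (‖c‖ / t) := by
        rw [nsmul_eq_mul]
        gcongr
        exact_mod_cast (card_filter_le _ _).trans (card_fin n).le

lemma exists_coeffs_sum_zpow_eq_one {n : ℕ} {σ : Finset (Fin n → ℤ)} {η : Fin n → ℤ} {t : ℝ}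
    (ht1 : 1 < t) (ht : 4 * n ≤ t) (φ : Fin n → σ) (hφ : ∀ i, (φ i : Fin n → ℤ) i = η i)
    (hsurj : Function.Surjective φ) (hlt : ∀ (β : σ) i, φ i ≠ β → (β : Fin n → ℤ) i < η i) :
    ∃ c : σ → ℝ, (∀ β : σ, ∑ i, c (φ i) * t ^ ((β : Fin n → ℤ) i - η i) = 1) ∧
      ∀ β, 2 ≤ 3 * n * c β := by
  let f : (σ → ℝ) →ₗ[ℝ] σ → ℝ :=
    LinearMap.pi fun β => ∑ i, t ^ ((β : Fin n → ℤ) i - η i) • LinearMap.proj (φ i)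
  have hf : ∀ c β, f c β = ∑ i, c (φ i) * t ^ ((β : Fin n → ℤ) i - η i) := fun c β => by
    simp [f, mul_comm]
  let d : σ → ℝ := fun β => #{i | φ i = β}
  have hd1 : ∀ β, 1 ≤ d β := fun β => by
    obtain ⟨i, hi⟩ := hsurj β
    exact Nat.one_le_cast.mpr (card_pos.mpr ⟨i, mem_filter.mpr ⟨mem_univ i, hi⟩⟩)
  have hdn : ∀ β, d β ≤ n := fun β =>
    Nat.cast_le.mpr ((card_filter_le univ fun i => φ i = β).trans (card_fin n).le)
  have hoff : ∀ c β, |f c β - d β * c β| ≤ ‖c‖ / 4 := fun c β => by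
    have hdiag : ∑ i with φ i = β, c (φ i) * t ^ ((β : Fin n → ℤ) i - η i) = d β * c β := by
      rw [← nsmul_eq_mul, ← sum_const]
      refine sum_congr rfl fun i hi => ?_
      obtain rfl := (mem_filter.mp hi).2
      rw [hφ, sub_self, zpow_zero, mul_one]
    rw [hf, ← sum_filter_add_sum_filter_not univ fun i => φ i = β, hdiag, add_sub_cancel_left]
    refine (abs_sum_filter_mul_zpow_le ht1 φ β (fun i hi => by linarith [hlt β i hi]) c).trans ?_
    rw [mul_div_assoc', div_le_div_iff₀ (by linarith) (by norm_num)]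
    nlinarith [norm_nonneg c]
  obtain ⟨c, hc, hc23⟩ := f.exists_apply_eq_one_of_near_diagonal hd1 hoff
  refine ⟨c, fun β => by rw [← hf, hc, Pi.one_apply], fun β => ?_⟩
  have hc0 : 0 ≤ c β := by nlinarith [hc23 β, hd1 β]
  nlinarith [hc23 β, hdn β]

section Neighborly

variable {n : ℕ} {t : ℝ} {A : Set (Fin n → ℤ)} {σ : Finset (Fin n → ℤ)}

lemma Neighborly.exists_vee_le (hσ : Neighborly A σ) {α : Fin n → ℤ} (hα : α ∈ A) :
    ∃ i, vee σ i ≤ α i := by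
  simpa [Dom] using hσ.2.2 α hα

lemma Neighborly.eq_of_apply_eq_vee (hgen : Generic A) (hσ : Neighborly A σ)
    {α β : Fin n → ℤ} (hα : α ∈ A) (hαη : α ≤ vee σ) (hβ : β ∈ σ) {i : Fin n}
    (hαi : α i = vee σ i) (hβi : β i = vee σ i) : α = β :=
  hgen _ hσ.2.2 i α hα β (hσ.2.1 hβ) hαη hαi (le_vee_s14 hβ) hβi

lemma Neighborly.mem_of_le_vee (hgen : Generic A) (hσ : Neighborly A σ) {α : Fin n → ℤ}
    (hα : α ∈ A) (hαη : α ≤ vee σ) : α ∈ σ := by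
  obtain ⟨i, hi⟩ := hσ.exists_vee_le hα
  obtain ⟨β, hβ, hβi⟩ := exists_apply_eq_vee hσ.1 i
  exact hσ.eq_of_apply_eq_vee hgen hα hαη hβ (le_antisymm (hαη i) hi) hβi ▸ hβ

lemma exists_weights_of_neighborly (hgen : Generic A) (hσ : Neighborly A σ)
    (ht : 4 * n + 4 ≤ t) :
    ∃ w : Fin n → ℝ, (∀ i, 0 < w i) ∧ (∀ β ∈ σ, w ⬝ᵥ Et t β = 1) ∧
      ∀ α ∈ A, α ∉ σ → 1 < w ⬝ᵥ Et t α := by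
  set η := vee σ
  have ht0 : 0 < t := by linarith
  have hattain : ∀ i, ∃ β : σ, (β : Fin n → ℤ) i = η i := fun i =>
    let ⟨β, hβ, hβi⟩ := exists_apply_eq_vee hσ.1 i; ⟨⟨β, hβ⟩, hβi⟩
  choose φ hφ using hattain
  have hφ_eq : ∀ (β : σ) i, (β : Fin n → ℤ) i = η i → φ i = β := fun β i hβi =>
    Subtype.ext (hσ.eq_of_apply_eq_vee hgen (hσ.2.1 β.2) (le_vee_s14 β.2) (φ i).2 hβi (hφ i)).symm
  have hsurj : Function.Surjective φ := fun β => by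
    obtain ⟨i, hi⟩ := hσ.exists_vee_le (hσ.2.1 β.2)
    exact ⟨i, hφ_eq β i (le_antisymm (le_vee_s14 β.2 i) hi)⟩
  have hlt : ∀ (β : σ) i, φ i ≠ β → (β : Fin n → ℤ) i < η i := fun β i hne =>
    (le_vee_s14 β.2 i).lt_of_ne fun h => hne (hφ_eq β i h)
  obtain ⟨c, hc, hc_lower⟩ :=
    exists_coeffs_sum_zpow_eq_one (by linarith) (by linarith) φ hφ hsurj hlt
  have hcpos : ∀ β, 0 < c β := fun β => by nlinarith [hc_lower β]
  set w : Fin n → ℝ := fun i => c (φ i) * t ^ (-η i)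
  have hw : ∀ α : Fin n → ℤ, w ⬝ᵥ Et t α = ∑ i, c (φ i) * t ^ (α i - η i) :=
    fun α => sum_congr rfl fun i _ => by
      rw [Et, mul_assoc, ← zpow_add₀ ht0.ne', neg_add_eq_sub]
  refine ⟨w, fun i => mul_pos (hcpos _) (zpow_pos ht0 _),
    fun β hβ => (hw β).trans (hc ⟨β, hβ⟩), fun α hα hασ => ?_⟩
  obtain ⟨i, hi⟩ : ∃ i, η i < α i := by
    by_contra! h
    exact hασ (hσ.mem_of_le_vee hgen hα h)
  rw [hw]
  calc 1 < c (φ i) * t := by nlinarith [hc_lower (φ i), hcpos (φ i)]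
    _ ≤ c (φ i) * t ^ (α i - η i) := by
      refine mul_le_mul_of_nonneg_left ?_ (hcpos _).le
      calc t = t ^ (1 : ℤ) := (zpow_one t).symm
        _ ≤ t ^ (α i - η i) := zpow_le_zpow_right₀ (by linarith) (by omega)
    _ ≤ ∑ i, c (φ i) * t ^ (α i - η i) :=
      single_le_sum (f := fun j => c (φ j) * t ^ (α j - η j))
        (fun j _ => mul_nonneg (hcpos _).le (zpow_pos ht0 _).le) (mem_univ i)

lemma isExposedFace_Pt_of_neighborly (hgen : Generic A) (hσ : Neighborly A σ)
    (ht : 4 * n + 4 ≤ t) : IsExposedFace (Pt t A) (convexHull ℝ (Et t '' ↑σ)) := by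
  obtain ⟨w, hw, hσw, hAw⟩ := exists_weights_of_neighborly hgen hσ ht
  refine isExposedFace_convexHull_add_orthant (Set.image_mono hσ.2.1) (hσ.1.to_set.image _)
    hw ?_ ?_
  · rintro _ ⟨β, hβ, rfl⟩
    exact hσw β hβ
  · rintro _ ⟨⟨α, hα, rfl⟩, hασ⟩
    exact hAw α hα fun h => hασ ⟨α, h, rfl⟩

lemma isExposedFace_Pt_iff_neighborly (hn : 0 < n) (hgen : Generic A) (ht : 4 * n + 4 ≤ t)
    (hσ : σ.Nonempty) (hσA : ↑σ ⊆ A) :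
    IsExposedFace (Pt t A) (convexHull ℝ (Et t '' ↑σ)) ↔ Neighborly A σ := by
  have : (n : ℝ) + 1 ≤ t := by linarith [(n.cast_nonneg : (0 : ℝ) ≤ n)]
  exact ⟨neighborly_of_isExposedFace hn (by linarith) (by linarith) hσ hσA,
    fun h => isExposedFace_Pt_of_neighborly hgen h ht⟩

end Neighborly

theorem stmt14_general {n : ℕ} (A : Set (Fin n → ℤ)) (hgen : Generic A) :
    ∃ T : ℝ, 1 < T ∧ ∀ t t' : ℝ, T ≤ t → T ≤ t' →
      ∀ σ : Finset (Fin n → ℤ), σ.Nonempty → ↑σ ⊆ A →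
        (IsExposedFace (Pt t A) (convexHull ℝ (Et t '' (↑σ : Set (Fin n → ℤ)))) ↔
          IsExposedFace (Pt t' A) (convexHull ℝ (Et t' '' (↑σ : Set (Fin n → ℤ))))) := by
  refine ⟨4 * n + 4, by norm_cast; omega, fun t t' ht ht' σ hσ hσA => ?_⟩
  rcases n.eq_zero_or_pos with rfl | hn
  -- In dimension `0` no `σ` is neighborly (`Dom` holds vacuously), but `P_t(A)` is a point.
  · have hface : ∀ s : ℝ, IsExposedFace (Pt s A) (convexHull ℝ (Et s '' ↑σ)) := fun s =>
      isExposedFace_of_fin_zero ((hσ.to_set.image _).convexHull) (convexHull_subset_Pt hσA)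
    exact iff_of_true (hface t) (hface t')
  · rw [isExposedFace_Pt_iff_neighborly hn hgen ht hσ hσA,
      isExposedFace_Pt_iff_neighborly hn hgen ht' hσ hσA]

theorem stmt14 {n : ℕ} (Λ : AddSubgroup (Fin n → ℤ)) (hΛ : IsAntichainLattice Λ)
    (A : Set (Fin n → ℤ)) (hA : LambdaFinite Λ A) (hgen : Generic A) :
    ∃ T : ℝ, 1 < T ∧ ∀ t t' : ℝ, T ≤ t → T ≤ t' →
      ∀ σ : Finset (Fin n → ℤ), σ.Nonempty → ↑σ ⊆ A →
        (IsExposedFace (Pt t A) (convexHull ℝ (Et t '' (↑σ : Set (Fin n → ℤ)))) ↔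
          IsExposedFace (Pt t' A) (convexHull ℝ (Et t' '' (↑σ : Set (Fin n → ℤ))))) :=
  stmt14_general A hgen
end

section
/- Let p ≥ 1 and let a be a p × p matrix of integers such that for every row index i and every column index k ≠ i one has a(i,i) > a(i,k). Then for every real number t with t > p and t > 1, the p × p real matrix M with entries M(i,k) = t^{a(i,k)} is nonsingular, i.e., det M ≠ 0. (In particular, the p points (t^{a(1,k)}, …, t^{a(p,k)}) ∈ ℝᵖ, for k = 1, …, p, are affinely independent.) -/
/-!
The matrix `(t ^ a i k)` is strictly diagonally dominant: in row `i` each of the `p - 1`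
off-diagonal entries is at most `t ^ (a i i - 1)`, so their sum is below
`t * t ^ (a i i - 1) = t ^ a i i` as soon as `p - 1 < t`. Its determinant is then nonzero
by Gershgorin's theorem, and its columns, being linearly independent, are affinely independent.
-/

open Finset

theorem sum_erase_zpow_lt_zpow {ι : Type*} [Fintype ι] [DecidableEq ι] {b : ι → ℤ} {i : ι}
    (hb : ∀ k, k ≠ i → b k < b i) {t : ℝ} (ht1 : 1 < t)
    (htcard : (Fintype.card ι : ℝ) - 1 < t) :
    ∑ k ∈ univ.erase i, t ^ b k < t ^ b i := by
  have ht0 : 0 < t := one_pos.trans ht1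
  have hcard : ((#(univ.erase i) : ℕ) : ℝ) = Fintype.card ι - 1 := by
    rw [card_erase_of_mem (mem_univ i), card_univ,
      Nat.cast_pred (Fintype.card_pos_iff.mpr ⟨i⟩)]
  calc ∑ k ∈ univ.erase i, t ^ b k
      ≤ ∑ _k ∈ univ.erase i, t ^ (b i - 1) :=
        sum_le_sum fun k hk => zpow_le_zpow_right₀ ht1.le
          (Int.le_sub_one_of_lt (hb k (ne_of_mem_erase hk)))
    _ = (Fintype.card ι - 1) * t ^ (b i - 1) := by rw [sum_const, nsmul_eq_mul, hcard]
    _ < t * t ^ (b i - 1) := mul_lt_mul_of_pos_right htcard (zpow_pos ht0 _)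
    _ = t ^ b i := by rw [← zpow_one_add₀ ht0.ne', add_sub_cancel]

theorem det_of_zpow_ne_zero_of_lt_diag {ι : Type*} [Fintype ι] [DecidableEq ι]
    {a : Matrix ι ι ℤ} (ha : ∀ i k, k ≠ i → a i k < a i i) {t : ℝ} (ht1 : 1 < t)
    (htcard : (Fintype.card ι : ℝ) - 1 < t) :
    (Matrix.of fun i k => t ^ a i k).det ≠ 0 := by
  have hnorm : ∀ z : ℤ, ‖t ^ z‖ = t ^ z := fun z =>
    Real.norm_of_nonneg (zpow_nonneg (by linarith) z)
  refine det_ne_zero_of_sum_row_lt_diag fun i => ?_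
  simpa only [Matrix.of_apply, hnorm] using sum_erase_zpow_lt_zpow (ha i) ht1 htcard

theorem stmt18_general {p : ℕ} (a : Matrix (Fin p) (Fin p) ℤ)
    (ha : ∀ i k, k ≠ i → a i k < a i i)
    (t : ℝ) (ht1 : 1 < t) (htp : (p : ℝ) < t) :
    (Matrix.of fun i k : Fin p => t ^ (a i k)).det ≠ 0 ∧
      AffineIndependent ℝ (fun k : Fin p => fun i : Fin p => t ^ (a i k)) := by
  have hdet := det_of_zpow_ne_zero_of_lt_diag ha ht1 (by rw [Fintype.card_fin]; linarith)
  exact ⟨hdet, (Matrix.linearIndependent_cols_of_det_ne_zero hdet).affineIndependent⟩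

theorem stmt18 {p : ℕ} (hp : 1 ≤ p) (a : Matrix (Fin p) (Fin p) ℤ)
    (ha : ∀ i k, k ≠ i → a i k < a i i)
    (t : ℝ) (ht1 : 1 < t) (htp : (p : ℝ) < t) :
    (Matrix.of fun i k : Fin p => t ^ (a i k)).det ≠ 0 ∧
      AffineIndependent ℝ (fun k : Fin p => fun i : Fin p => t ^ (a i k)) :=
  stmt18_general a ha t ht1 htp
end
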